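/- arXiv:2308.13251 — 2 statements merged into one kernel-verified Lean document; each statement's English description precedes it below -/
import Mathlib

section
/- Let H₁ and H₂ be two B-balanced realizations of the same third almost-regular partite 3-uniform hypergraph degree sequence D = (D_A, D_B, D_C). Then there exists a finite series of switch operations that transforms H₁ into H₂. -/
/-
Both a hypergraph and, once a common level `L b` is fixed for the two `B`-balanced projections
(entries `L b` or `L b - 1` in column `b`), its `(A,B)`-projection are recorded as 0/1 matrices:
the incidence matrix with rows `A × B` and columns `C`, and the matrix marking the projection
entries that sit at level `L b`. The two matrices to be matched have equal row and column sums.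
A counting argument on two columns then yields a rectangle, switchable in one of the two matrices,
on which they disagree in at least three of its four cells; flipping it is an `A`-switch for the
projection matrix and a `C`-switch for the incidence matrix, and it lowers the number of
disagreements. Since switches are reversible, this lets `A`-switches first equalize the
projections and `C`-switches, which keep the projection, then equalize the hypergraphs.
-/

open Finset

variable {A B C : Type*} [Fintype A] [Fintype B] [Fintype C]
  [DecidableEq A] [DecidableEq B] [DecidableEq C]

/-- Degree of a vertex `a ∈ A` in a partite 3-uniform hypergraph with edge set `E`. -/
def hDegA (E : Finset (A × B × C)) (a : A) : ℕ := (E.filter fun e => e.1 = a).card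

/-- Degree of a vertex `b ∈ B`. -/
def hDegB (E : Finset (A × B × C)) (b : B) : ℕ := (E.filter fun e => e.2.1 = b).card

/-- Degree of a vertex `c ∈ C`. -/
def hDegC (E : Finset (A × B × C)) (c : C) : ℕ := (E.filter fun e => e.2.2 = c).card

/-- Multiplicity of the pair `(a,b)` in the `(A,B)`-projection of the hypergraph `E`. -/
def projAB (E : Finset (A × B × C)) (a : A) (b : B) : ℕ :=
  (E.filter fun e => e.1 = a ∧ e.2.1 = b).card

/-- The `(A,B)`-projection of `E` is `B`-balanced. -/
def BBalanced (E : Finset (A × B × C)) : Prop :=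
  ∀ b : B, ∃ l : ℕ, ∀ a : A, projAB E a b = l ∨ projAB E a b + 1 = l

/-- A single switch operation (in any one of the three vertex classes). -/
def IsSwitch (E E' : Finset (A × B × C)) : Prop :=
  (∃ a₁ a₂ b₁ c₁ b₂ c₂, (a₁, b₁, c₁) ∈ E ∧ (a₂, b₂, c₂) ∈ E ∧
    (a₂, b₁, c₁) ∉ E ∧ (a₁, b₂, c₂) ∉ E ∧
    E' = insert (a₂, b₁, c₁) (insert (a₁, b₂, c₂)
      ((E.erase (a₁, b₁, c₁)).erase (a₂, b₂, c₂)))) ∨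
  (∃ b₁ b₂ a₁ c₁ a₂ c₂, (a₁, b₁, c₁) ∈ E ∧ (a₂, b₂, c₂) ∈ E ∧
    (a₁, b₂, c₁) ∉ E ∧ (a₂, b₁, c₂) ∉ E ∧
    E' = insert (a₁, b₂, c₁) (insert (a₂, b₁, c₂)
      ((E.erase (a₁, b₁, c₁)).erase (a₂, b₂, c₂)))) ∨
  (∃ c₁ c₂ a₁ b₁ a₂ b₂, (a₁, b₁, c₁) ∈ E ∧ (a₂, b₂, c₂) ∈ E ∧
    (a₁, b₁, c₂) ∉ E ∧ (a₂, b₂, c₁) ∉ E ∧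
    E' = insert (a₁, b₁, c₂) (insert (a₂, b₂, c₁)
      ((E.erase (a₁, b₁, c₁)).erase (a₂, b₂, c₂))))

section Matrices

variable {ι κ : Type*} [Fintype ι]

theorem card_filter_eq_of_sum_eq {f g L : ι → ℕ} (hf : ∀ i, f i = L i ∨ f i + 1 = L i)
    (hg : ∀ i, g i = L i ∨ g i + 1 = L i) (h : ∑ i, f i = ∑ i, g i) :
    #{i | f i = L i} = #{i | g i = L i} := by
  have key : ∀ {f : ι → ℕ}, (∀ i, f i = L i ∨ f i + 1 = L i) →
      (#{i | f i = L i} : ℤ) = ∑ i, (f i : ℤ) - ∑ i, ((L i : ℤ) - 1) := by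
    intro f hf
    rw [natCast_card_filter, ← sum_sub_distrib]
    refine sum_congr rfl fun i _ => ?_
    rcases hf i with h | h <;> split_ifs <;> omega
  have hZ : ∑ i, (f i : ℤ) = ∑ i, (g i : ℤ) := by exact_mod_cast h
  exact_mod_cast (key hf).trans (hZ ▸ (key hg).symm)

theorem exists_and_not_of_card_filter_eq {p q : ι → Prop} [DecidablePred p] [DecidablePred q]
    (h : #{i | p i} = #{i | q i}) {i₀ : ι} (hp : p i₀) (hq : ¬q i₀) : ∃ i, q i ∧ ¬p i := by
  by_contra! H
  have hlt : #{i | q i} < #{i | p i} := card_lt_card <|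
    (ssubset_iff_of_subset fun i hi => by simp_all).2 ⟨i₀, by simp [hp], by simp [hq]⟩
  exact hlt.ne' h

theorem sum_lt_sum_of_eq_outside {M : Type*} [AddCommMonoid M] [PartialOrder M]
    [IsOrderedCancelAddMonoid M] [DecidableEq ι] {f g : ι → M} (s : Finset ι)
    (hout : ∀ i ∉ s, f i = g i) (hs : ∑ i ∈ s, f i < ∑ i ∈ s, g i) : ∑ i, f i < ∑ i, g i := by
  rw [← sum_add_sum_compl s f, ← sum_add_sum_compl s g,
    sum_congr rfl fun i hi => hout i (mem_compl.1 hi)]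
  exact add_lt_add_left hs _

theorem exists_common_level {f g : ι → ℕ} (hf : ∃ l, ∀ i, f i = l ∨ f i + 1 = l)
    (hg : ∃ l, ∀ i, g i = l ∨ g i + 1 = l) (h : ∑ i, f i = ∑ i, g i) :
    ∃ l, ∀ i, (f i = l ∨ f i + 1 = l) ∧ (g i = l ∨ g i + 1 = l) := by
  obtain ⟨l₁, h₁⟩ := hf
  obtain ⟨l₂, h₂⟩ := hg
  wlog hl : l₁ ≤ l₂ generalizing f g l₁ l₂
  · obtain ⟨l, hl⟩ := this h.symm l₂ h₂ l₁ h₁ (by omega)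
    exact ⟨l, fun i => (hl i).symm⟩
  obtain rfl | hlt := hl.eq_or_lt
  · exact ⟨l₁, fun i => ⟨h₁ i, h₂ i⟩⟩
  -- `f ≤ l₁ ≤ l₂ - 1 ≤ g` entrywise, so equal sums force `f = g`
  have hfg := (sum_eq_sum_iff_of_le fun i _ => by have := h₁ i; have := h₂ i; omega).1 h
  exact ⟨l₂, fun i => ⟨hfg i (mem_univ i) ▸ h₂ i, h₂ i⟩⟩

/-- A rectangle that can be switched in `P` and on which `P` disagrees with `Q` in at least three
of its four cells. -/
def IsImprovingRect (P Q : ι → κ → Prop) (i₁ i₂ : ι) (j₁ j₂ : κ) : Prop :=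
  P i₁ j₁ ∧ ¬P i₁ j₂ ∧ ¬P i₂ j₁ ∧ P i₂ j₂ ∧ ¬Q i₁ j₁ ∧ Q i₁ j₂ ∧ (Q i₂ j₁ ∨ ¬Q i₂ j₂)

def disagreement [Fintype κ] (P Q : ι → κ → Prop) [DecidableRel P] [DecidableRel Q] : ℕ :=
  #{x : ι × κ | ¬(P x.1 x.2 ↔ Q x.1 x.2)}

variable {P Q : ι → κ → Prop} [DecidableRel P] [DecidableRel Q]

theorem disagreement_comm [Fintype κ] : disagreement P Q = disagreement Q P := by
  simp only [disagreement, iff_comm]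

theorem disagreement_lt_of_isImprovingRect [Fintype κ] [DecidableEq ι] [DecidableEq κ]
    {P' : ι → κ → Prop} [DecidableRel P'] {i₁ i₂ : ι} {j₁ j₂ : κ}
    (hR : IsImprovingRect P Q i₁ i₂ j₁ j₂)
    (hout : ∀ i j, ¬((i = i₁ ∨ i = i₂) ∧ (j = j₁ ∨ j = j₂)) → (P' i j ↔ P i j))
    (hin : ¬P' i₁ j₁ ∧ P' i₁ j₂ ∧ P' i₂ j₁ ∧ ¬P' i₂ j₂) :
    disagreement P' Q < disagreement P Q := by
  obtain ⟨p₁₁, p₁₂, p₂₁, p₂₂, q₁₁, q₁₂, q₂⟩ := hR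
  obtain ⟨p₁₁', p₁₂', p₂₁', p₂₂'⟩ := hin
  have hi : i₁ ≠ i₂ := fun h => p₂₁ (h ▸ p₁₁)
  have hj : j₁ ≠ j₂ := fun h => p₁₂ (h ▸ p₁₁)
  simp only [disagreement, card_filter]
  refine sum_lt_sum_of_eq_outside ({i₁, i₂} ×ˢ {j₁, j₂}) (fun x hx => ?_) ?_
  · simp only [mem_product, mem_insert, mem_singleton] at hx
    simp only [hout x.1 x.2 hx]
  · simp only [sum_product, sum_pair hi, sum_pair hj]
    by_cases Q i₂ j₁ <;> by_cases Q i₂ j₂ <;> simp_all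

theorem exists_isImprovingRect_of_row (hcol : ∀ j, #{i | P i j} = #{i | Q i j}) {i₀ : ι}
    {j₁ j₂ : κ} (h₁ : P i₀ j₁ ∧ ¬Q i₀ j₁) (h₂ : ¬P i₀ j₂ ∧ Q i₀ j₂) :
    ∃ i, IsImprovingRect P Q i₀ i j₁ j₂ ∨ IsImprovingRect Q P i₀ i j₂ j₁ := by
  by_contra! H
  -- `w ≥ 0` on every row since none completes a rectangle, and `w i₀ = 2`, yet `∑ i, w i = 0`
  let w : ι → ℤ := fun i => ((if P i j₁ then 1 else 0) - if Q i j₁ then 1 else 0) -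
    ((if P i j₂ then 1 else 0) - if Q i j₂ then 1 else 0)
  have hw : ∀ i, 0 ≤ w i := fun i => by
    have := H i
    simp only [IsImprovingRect, h₁, h₂] at this
    simp only [w]
    split_ifs <;> simp_all
  have hsum : ∑ i, w i = 0 := by
    simp only [w, sum_sub_distrib, ← natCast_card_filter, hcol, sub_self]
  exact (sum_pos' (fun i _ => hw i) ⟨i₀, mem_univ _, by simp [w, h₁, h₂]⟩).ne' hsum

theorem exists_isImprovingRect [Fintype κ] (hrow : ∀ i, #{j | P i j} = #{j | Q i j})
    (hcol : ∀ j, #{i | P i j} = #{i | Q i j}) (hne : ∃ i j, ¬(P i j ↔ Q i j)) :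
    ∃ i₁ i₂ j₁ j₂, IsImprovingRect P Q i₁ i₂ j₁ j₂ ∨ IsImprovingRect Q P i₁ i₂ j₁ j₂ := by
  obtain ⟨i, j, hij⟩ := hne
  obtain ⟨i₀, hP, hQ⟩ : ∃ i₀, P i₀ j ∧ ¬Q i₀ j := by
    by_cases hP : P i j
    · exact ⟨i, hP, fun hQ => hij (iff_of_true hP hQ)⟩
    · exact exists_and_not_of_card_filter_eq (hcol j).symm (by tauto) hP
  obtain ⟨j₂, hQ₂, hP₂⟩ := exists_and_not_of_card_filter_eq (hrow i₀) hP hQ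
  obtain ⟨i₂, hR | hR⟩ := exists_isImprovingRect_of_row hcol ⟨hP, hQ⟩ ⟨hP₂, hQ₂⟩
  exacts [⟨_, _, _, _, .inl hR⟩, ⟨_, _, _, _, .inr hR⟩]

end Matrices

section Replace

variable {α : Type*} [DecidableEq α] {s : Finset α} {e₁ e₂ f₁ f₂ : α}

theorem card_filter_replace (p : α → Prop) [DecidablePred p] (he₁ : e₁ ∈ s) (he₂ : e₂ ∈ s)
    (he : e₁ ≠ e₂) (hf₁ : f₁ ∉ s) (hf₂ : f₂ ∉ s) (hf : f₁ ≠ f₂) :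
    #{x ∈ insert f₁ (insert f₂ ((s.erase e₁).erase e₂)) | p x} + (if p e₁ then 1 else 0) +
        (if p e₂ then 1 else 0) =
      #{x ∈ s | p x} + (if p f₁ then 1 else 0) + (if p f₂ then 1 else 0) := by
  have he₂' : e₂ ∈ s.erase e₁ := mem_erase.2 ⟨he.symm, he₂⟩
  have hf₂' : f₂ ∉ (s.erase e₁).erase e₂ := fun h => hf₂ (mem_of_mem_erase (mem_of_mem_erase h))
  have hf₁' : f₁ ∉ insert f₂ ((s.erase e₁).erase e₂) := by
    simp only [mem_insert, mem_erase, not_or]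
    exact ⟨hf, fun h => hf₁ h.2.2⟩
  rw [card_filter, card_filter, sum_insert hf₁', sum_insert hf₂', ← add_sum_erase _ _ he₁,
    ← add_sum_erase _ _ he₂']
  ring

theorem card_filter_replace_of_sym2_eq {β : Type*} (π : α → β) (b : β) [DecidableEq β]
    (he₁ : e₁ ∈ s) (he₂ : e₂ ∈ s) (he : e₁ ≠ e₂) (hf₁ : f₁ ∉ s) (hf₂ : f₂ ∉ s) (hf : f₁ ≠ f₂)
    (hπ : s(π e₁, π e₂) = s(π f₁, π f₂)) :
    #{x ∈ insert f₁ (insert f₂ ((s.erase e₁).erase e₂)) | π x = b} = #{x ∈ s | π x = b} := by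
  have := card_filter_replace (π · = b) he₁ he₂ he hf₁ hf₂ hf
  rcases Sym2.eq_iff.1 hπ with ⟨h₁, h₂⟩ | ⟨h₁, h₂⟩ <;> simp only [h₁, h₂] at this <;> omega

theorem eq_replace_replace (he₁ : e₁ ∈ s) (he₂ : e₂ ∈ s) (hf₁ : f₁ ∉ s) (hf₂ : f₂ ∉ s) :
    s = insert e₁ (insert e₂
      (((insert f₁ (insert f₂ ((s.erase e₁).erase e₂))).erase f₁).erase f₂)) := by
  ext x
  simp only [mem_insert, mem_erase]
  grind

theorem notMem_replace_left (he₁ : e₁ ∈ s) (hf₁ : f₁ ∉ s) (hf₂ : f₂ ∉ s) :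
    e₁ ∉ insert f₁ (insert f₂ ((s.erase e₁).erase e₂)) := by
  simp only [mem_insert, mem_erase]
  grind

theorem notMem_replace_right (he₂ : e₂ ∈ s) (hf₁ : f₁ ∉ s) (hf₂ : f₂ ∉ s) :
    e₂ ∉ insert f₁ (insert f₂ ((s.erase e₁).erase e₂)) := by
  simp only [mem_insert, mem_erase]
  grind

end Replace

section Hypergraphs

omit [Fintype A] [Fintype B] [Fintype C]

theorem IsSwitch.symm {E E' : Finset (A × B × C)} (h : IsSwitch E E') : IsSwitch E' E := by
  rcases h with ⟨a₁, a₂, b₁, c₁, b₂, c₂, h₁, h₂, h₃, h₄, rfl⟩ |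
    ⟨b₁, b₂, a₁, c₁, a₂, c₂, h₁, h₂, h₃, h₄, rfl⟩ | ⟨c₁, c₂, a₁, b₁, a₂, b₂, h₁, h₂, h₃, h₄, rfl⟩
  · exact .inl ⟨a₂, a₁, b₁, c₁, b₂, c₂, by simp, by simp, notMem_replace_left h₁ h₃ h₄,
      notMem_replace_right h₂ h₃ h₄, eq_replace_replace h₁ h₂ h₃ h₄⟩
  · exact .inr <| .inl ⟨b₂, b₁, a₁, c₁, a₂, c₂, by simp, by simp, notMem_replace_left h₁ h₃ h₄,
      notMem_replace_right h₂ h₃ h₄, eq_replace_replace h₁ h₂ h₃ h₄⟩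
  · exact .inr <| .inr ⟨c₂, c₁, a₁, b₁, a₂, b₂, by simp, by simp, notMem_replace_left h₁ h₃ h₄,
      notMem_replace_right h₂ h₃ h₄, eq_replace_replace h₁ h₂ h₃ h₄⟩

theorem IsSwitch.exists_replace {E E' : Finset (A × B × C)} (h : IsSwitch E E') :
    ∃ e₁ e₂ f₁ f₂, e₁ ∈ E ∧ e₂ ∈ E ∧ e₁ ≠ e₂ ∧ f₁ ∉ E ∧ f₂ ∉ E ∧ f₁ ≠ f₂ ∧
      E' = insert f₁ (insert f₂ ((E.erase e₁).erase e₂)) ∧ s(e₁.1, e₂.1) = s(f₁.1, f₂.1) ∧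
      s(e₁.2.1, e₂.2.1) = s(f₁.2.1, f₂.2.1) ∧ s(e₁.2.2, e₂.2.2) = s(f₁.2.2, f₂.2.2) := by
  rcases h with ⟨a₁, a₂, b₁, c₁, b₂, c₂, h₁, h₂, h₃, h₄, rfl⟩ |
    ⟨b₁, b₂, a₁, c₁, a₂, c₂, h₁, h₂, h₃, h₄, rfl⟩ | ⟨c₁, c₂, a₁, b₁, a₂, b₂, h₁, h₂, h₃, h₄, rfl⟩
  all_goals
    refine ⟨_, _, _, _, h₁, h₂, ?_, h₃, h₄, ?_, rfl, ?_⟩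
    · rintro ⟨⟩; exact h₃ h₁
    · rintro ⟨⟩; exact h₃ h₁
    · simp [Sym2.eq_swap]

theorem IsSwitch.hDegA_eq {E E' : Finset (A × B × C)} (h : IsSwitch E E') :
    hDegA E' = hDegA E := by
  obtain ⟨e₁, e₂, f₁, f₂, he₁, he₂, he, hf₁, hf₂, hf, rfl, hA, -⟩ := h.exists_replace
  exact funext fun a => card_filter_replace_of_sym2_eq _ a he₁ he₂ he hf₁ hf₂ hf hA

theorem IsSwitch.hDegB_eq {E E' : Finset (A × B × C)} (h : IsSwitch E E') :
    hDegB E' = hDegB E := by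
  obtain ⟨e₁, e₂, f₁, f₂, he₁, he₂, he, hf₁, hf₂, hf, rfl, -, hB, -⟩ := h.exists_replace
  exact funext fun b => card_filter_replace_of_sym2_eq _ b he₁ he₂ he hf₁ hf₂ hf hB

theorem IsSwitch.hDegC_eq {E E' : Finset (A × B × C)} (h : IsSwitch E E') :
    hDegC E' = hDegC E := by
  obtain ⟨e₁, e₂, f₁, f₂, he₁, he₂, he, hf₁, hf₂, hf, rfl, -, -, hC⟩ := h.exists_replace
  exact funext fun c => card_filter_replace_of_sym2_eq _ c he₁ he₂ he hf₁ hf₂ hf hC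

theorem projAB_eq_card [Fintype C] (E : Finset (A × B × C)) (a : A) (b : B) :
    projAB E a b = #{c | (a, b, c) ∈ E} := by
  unfold projAB
  refine card_nbij' (fun e => e.2.2) (fun c => (a, b, c)) ?_ ?_ ?_ ?_ <;> intro x hx <;> aesop

theorem hDegC_eq_card [Fintype A] [Fintype B] (E : Finset (A × B × C)) (c : C) :
    hDegC E c = #{y : A × B | (y.1, y.2, c) ∈ E} := by
  unfold hDegC
  refine card_nbij' (fun e => (e.1, e.2.1)) (fun y => (y.1, y.2, c)) ?_ ?_ ?_ ?_ <;>
    intro x hx <;> aesop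

omit [DecidableEq C] in
theorem hDegA_eq_sum_projAB [Fintype B] (E : Finset (A × B × C)) (a : A) :
    hDegA E a = ∑ b, projAB E a b := by
  rw [hDegA, card_eq_sum_card_fiberwise (f := fun e => e.2.1) (t := univ) fun _ _ => mem_univ _]
  simp only [projAB, filter_filter]

omit [DecidableEq C] in
theorem hDegB_eq_sum_projAB [Fintype A] (E : Finset (A × B × C)) (b : B) :
    hDegB E b = ∑ a, projAB E a b := by
  rw [hDegB, card_eq_sum_card_fiberwise (f := fun e => e.1) (t := univ) fun _ _ => mem_univ _]
  simp only [projAB, filter_filter, and_comm]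

theorem exists_mem_notMem_of_projAB_lt [Fintype C] {E : Finset (A × B × C)} {a a' : A} {b : B}
    (h : projAB E a' b < projAB E a b) : ∃ c, (a, b, c) ∈ E ∧ (a', b, c) ∉ E := by
  rw [projAB_eq_card, projAB_eq_card] at h
  obtain ⟨c, hc, hc'⟩ := exists_mem_notMem_of_card_lt_card h
  exact ⟨c, (mem_filter.1 hc).2, fun h => hc' (mem_filter.2 ⟨mem_univ c, h⟩)⟩

def BBalancedWith (E : Finset (A × B × C)) (L : B → ℕ) : Prop :=
  ∀ a b, projAB E a b = L b ∨ projAB E a b + 1 = L b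

/-- Under `BBalancedWith E L` this 0/1 matrix determines the projection `projAB E`. -/
abbrev projAtLevel (E : Finset (A × B × C)) (L : B → ℕ) (a : A) (b : B) : Prop :=
  projAB E a b = L b

abbrev incidence (E : Finset (A × B × C)) (y : A × B) (c : C) : Prop :=
  (y.1, y.2, c) ∈ E

theorem exists_isSwitch_projAB [Fintype C] {E : Finset (A × B × C)} {a₁ a₂ : A} {b₁ b₂ : B}
    (h₁ : projAB E a₂ b₁ < projAB E a₁ b₁) (h₂ : projAB E a₁ b₂ < projAB E a₂ b₂) :
    ∃ K, IsSwitch E K ∧ ∀ a b,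
      projAB K a b + (if a₁ = a ∧ b₁ = b then 1 else 0) + (if a₂ = a ∧ b₂ = b then 1 else 0) =
        projAB E a b + (if a₂ = a ∧ b₁ = b then 1 else 0) + (if a₁ = a ∧ b₂ = b then 1 else 0) := by
  obtain ⟨c₁, hc₁, hc₁'⟩ := exists_mem_notMem_of_projAB_lt h₁
  obtain ⟨c₂, hc₂, hc₂'⟩ := exists_mem_notMem_of_projAB_lt h₂
  have ha : a₁ ≠ a₂ := by rintro rfl; exact h₁.ne rfl
  refine ⟨_, .inl ⟨a₁, a₂, b₁, c₁, b₂, c₂, hc₁, hc₂, hc₁', hc₂', rfl⟩, fun a b => ?_⟩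
  exact card_filter_replace (fun e => e.1 = a ∧ e.2.1 = b) hc₁ hc₂ (by simp [ha]) hc₁' hc₂'
    (by simp [ha.symm])

theorem exists_isSwitch_disagreement_projAtLevel_lt [Fintype A] [Fintype B] [Fintype C]
    {H G : Finset (A × B × C)} {L : B → ℕ} (hH : BBalancedWith H L) {a₁ a₂ : A} {b₁ b₂ : B}
    (hR : IsImprovingRect (projAtLevel H L) (projAtLevel G L) a₁ a₂ b₁ b₂) :
    ∃ K, IsSwitch H K ∧ BBalancedWith K L ∧
      disagreement (projAtLevel K L) (projAtLevel G L) <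
        disagreement (projAtLevel H L) (projAtLevel G L) := by
  obtain ⟨h₁₁, h₁₂, h₂₁, h₂₂, -⟩ := id hR
  have ha : a₁ ≠ a₂ := fun h => h₂₁ (h ▸ h₁₁)
  have hb : b₁ ≠ b₂ := fun h => h₁₂ (h ▸ h₁₁)
  have l₁₂ := (hH a₁ b₂).resolve_left h₁₂
  have l₂₁ := (hH a₂ b₁).resolve_left h₂₁
  obtain ⟨K, hsw, hK⟩ := exists_isSwitch_projAB (show projAB H a₂ b₁ < projAB H a₁ b₁ by omega)
    (show projAB H a₁ b₂ < projAB H a₂ b₂ by omega)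
  have hout : ∀ a b, ¬((a = a₁ ∨ a = a₂) ∧ (b = b₁ ∨ b = b₂)) → projAB K a b = projAB H a b :=
    fun a b hab => by have := hK a b; split_ifs at this <;> grind
  have k₁₁ := hK a₁ b₁
  have k₁₂ := hK a₁ b₂
  have k₂₁ := hK a₂ b₁
  have k₂₂ := hK a₂ b₂
  simp only [ha, ha.symm, hb, hb.symm, and_self, and_false, false_and, if_true, if_false]
    at k₁₁ k₁₂ k₂₁ k₂₂
  refine ⟨K, hsw, fun a b => ?_, disagreement_lt_of_isImprovingRect hR
    (fun a b hab => by simp only [projAtLevel, hout a b hab]) (by simp only [projAtLevel]; omega)⟩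
  by_cases hab : (a = a₁ ∨ a = a₂) ∧ (b = b₁ ∨ b = b₂)
  · obtain ⟨rfl | rfl, rfl | rfl⟩ := hab <;> omega
  · rw [hout a b hab]
    exact hH a b

theorem exists_isSwitch_disagreement_incidence_lt [Fintype A] [Fintype B] [Fintype C]
    {H G : Finset (A × B × C)} {y₁ y₂ : A × B} {c₁ c₂ : C}
    (hR : IsImprovingRect (incidence H) (incidence G) y₁ y₂ c₁ c₂) :
    ∃ K, IsSwitch H K ∧ projAB K = projAB H ∧
      disagreement (incidence K) (incidence G) < disagreement (incidence H) (incidence G) := by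
  obtain ⟨h₁₁, h₁₂, h₂₁, h₂₂, -⟩ := id hR
  have hy : y₁ ≠ y₂ := fun h => h₂₁ (h ▸ h₁₁)
  have hc : c₁ ≠ c₂ := fun h => h₁₂ (h ▸ h₁₁)
  refine ⟨_, .inr (.inr ⟨c₁, c₂, y₁.1, y₁.2, y₂.1, y₂.2, h₁₁, h₂₂, h₁₂, h₂₁, rfl⟩), ?_,
    disagreement_lt_of_isImprovingRect hR (fun y c hyc => ?_) ?_⟩
  · funext a b
    have := card_filter_replace (fun e => e.1 = a ∧ e.2.1 = b) h₁₁ h₂₂ (by simp [hc]) h₁₂ h₂₁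
      (by simp [hc.symm])
    dsimp only at this
    unfold projAB
    omega
  · simp only [incidence, mem_insert, mem_erase, Prod.ext_iff]
    grind
  · simp only [incidence, mem_insert, mem_erase, Prod.ext_iff]
    grind

theorem reflTransGen_isSwitch_of_projAB_eq [Fintype A] [Fintype B] [Fintype C]
    {H₁ H₂ : Finset (A × B × C)} (hAB : projAB H₁ = projAB H₂) (hC : hDegC H₁ = hDegC H₂) :
    Relation.ReflTransGen IsSwitch H₁ H₂ := by
  induction hn : disagreement (incidence H₁) (incidence H₂) using Nat.strong_induction_on
    generalizing H₁ H₂ with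
  | _ n ih =>
  by_cases heq : H₁ = H₂
  · exact heq ▸ .refl
  have hne : ∃ y c, ¬(incidence H₁ y c ↔ incidence H₂ y c) := by
    by_contra! h
    exact heq (ext fun e => h (e.1, e.2.1) e.2.2)
  have hrow (y : A × B) : #{c | incidence H₁ y c} = #{c | incidence H₂ y c} := by
    rw [← projAB_eq_card, ← projAB_eq_card, hAB]
  have hcol (c : C) : #{y | incidence H₁ y c} = #{y | incidence H₂ y c} := by
    rw [← hDegC_eq_card, ← hDegC_eq_card, hC]
  obtain ⟨y₁, y₂, c₁, c₂, hR | hR⟩ := exists_isImprovingRect hrow hcol hne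
  · obtain ⟨K, hsw, hK, hlt⟩ := exists_isSwitch_disagreement_incidence_lt hR
    exact .head hsw (ih _ (hn ▸ hlt) (hK.trans hAB) (hsw.hDegC_eq.trans hC) rfl)
  · obtain ⟨K, hsw, hK, hlt⟩ := exists_isSwitch_disagreement_incidence_lt hR
    rw [disagreement_comm, disagreement_comm (P := incidence H₂)] at hlt
    exact .tail (ih _ (hn ▸ hlt) (hAB.trans hK.symm) (hC.trans hsw.hDegC_eq.symm) rfl) hsw.symm

theorem reflTransGen_isSwitch_of_bBalancedWith [Fintype A] [Fintype B] [Fintype C]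
    {H₁ H₂ : Finset (A × B × C)} {L : B → ℕ} (h₁ : BBalancedWith H₁ L)
    (h₂ : BBalancedWith H₂ L) (hA : hDegA H₁ = hDegA H₂) (hB : hDegB H₁ = hDegB H₂)
    (hC : hDegC H₁ = hDegC H₂) : Relation.ReflTransGen IsSwitch H₁ H₂ := by
  induction hn : disagreement (projAtLevel H₁ L) (projAtLevel H₂ L) using Nat.strong_induction_on
    generalizing H₁ H₂ with
  | _ n ih =>
  by_cases hAB : projAB H₁ = projAB H₂
  · exact reflTransGen_isSwitch_of_projAB_eq hAB hC
  have hne : ∃ a b, ¬(projAtLevel H₁ L a b ↔ projAtLevel H₂ L a b) := by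
    by_contra! h
    refine hAB (funext₂ fun a b => ?_)
    have := h a b
    have := h₁ a b
    have := h₂ a b
    omega
  have hrow (a : A) : #{b | projAtLevel H₁ L a b} = #{b | projAtLevel H₂ L a b} :=
    card_filter_eq_of_sum_eq (h₁ a) (h₂ a)
      (by rw [← hDegA_eq_sum_projAB, ← hDegA_eq_sum_projAB, hA])
  have hcol (b : B) : #{a | projAtLevel H₁ L a b} = #{a | projAtLevel H₂ L a b} :=
    card_filter_eq_of_sum_eq (L := fun _ => L b) (h₁ · b) (h₂ · b)
      (by rw [← hDegB_eq_sum_projAB, ← hDegB_eq_sum_projAB, hB])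
  obtain ⟨a₁, a₂, b₁, b₂, hR | hR⟩ := exists_isImprovingRect hrow hcol hne
  · obtain ⟨K, hsw, hK, hlt⟩ := exists_isSwitch_disagreement_projAtLevel_lt h₁ hR
    exact .head hsw (ih _ (hn ▸ hlt) hK h₂ (hsw.hDegA_eq.trans hA) (hsw.hDegB_eq.trans hB)
      (hsw.hDegC_eq.trans hC) rfl)
  · obtain ⟨K, hsw, hK, hlt⟩ := exists_isSwitch_disagreement_projAtLevel_lt h₂ hR
    rw [disagreement_comm, disagreement_comm (P := projAtLevel H₂ L)] at hlt
    exact .tail (ih _ (hn ▸ hlt) h₁ hK (hA.trans hsw.hDegA_eq.symm) (hB.trans hsw.hDegB_eq.symm)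
      (hC.trans hsw.hDegC_eq.symm) rfl) hsw.symm

omit [DecidableEq C] in
theorem exists_bBalancedWith_of_bBalanced [Fintype A] {H₁ H₂ : Finset (A × B × C)}
    (h₁ : BBalanced H₁) (h₂ : BBalanced H₂) (hB : hDegB H₁ = hDegB H₂) :
    ∃ L, BBalancedWith H₁ L ∧ BBalancedWith H₂ L := by
  choose L hL using fun b => exists_common_level (h₁ b) (h₂ b)
    (by rw [← hDegB_eq_sum_projAB, ← hDegB_eq_sum_projAB, hB])
  exact ⟨L, fun a b => (hL b a).1, fun a b => (hL b a).2⟩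

end Hypergraphs

theorem balanced_realizations_switch_connected_general
    (dA : A → ℕ) (dB : B → ℕ) (dC : C → ℕ)
    (H₁ H₂ : Finset (A × B × C))
    (hH₁A : ∀ a, hDegA H₁ a = dA a) (hH₁B : ∀ b, hDegB H₁ b = dB b)
    (hH₁C : ∀ c, hDegC H₁ c = dC c)
    (hH₂A : ∀ a, hDegA H₂ a = dA a) (hH₂B : ∀ b, hDegB H₂ b = dB b)
    (hH₂C : ∀ c, hDegC H₂ c = dC c)
    (hbal₁ : BBalanced H₁) (hbal₂ : BBalanced H₂) :
    Relation.ReflTransGen IsSwitch H₁ H₂ := by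
  have hA : hDegA H₁ = hDegA H₂ := funext fun a => (hH₁A a).trans (hH₂A a).symm
  have hB : hDegB H₁ = hDegB H₂ := funext fun b => (hH₁B b).trans (hH₂B b).symm
  have hC : hDegC H₁ = hDegC H₂ := funext fun c => (hH₁C c).trans (hH₂C c).symm
  obtain ⟨L, hL₁, hL₂⟩ := exists_bBalancedWith_of_bBalanced hbal₁ hbal₂ hB
  exact reflTransGen_isSwitch_of_bBalancedWith hL₁ hL₂ hA hB hC

/-- any two `B`-balanced realizations `H₁`, `H₂` of the same third
almost-regular degree sequence `D = (D_A, D_B, D_C)` can be transformed into each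
other by a finite series of switch operations. -/
theorem balanced_realizations_switch_connected
    (dA : A → ℕ) (dB : B → ℕ) (dC : C → ℕ) (k : ℕ)
    (hreg : ∀ a : A, dA a = k ∨ dA a + 1 = k)
    (H₁ H₂ : Finset (A × B × C))
    (hH₁A : ∀ a, hDegA H₁ a = dA a) (hH₁B : ∀ b, hDegB H₁ b = dB b)
    (hH₁C : ∀ c, hDegC H₁ c = dC c)
    (hH₂A : ∀ a, hDegA H₂ a = dA a) (hH₂B : ∀ b, hDegB H₂ b = dB b)
    (hH₂C : ∀ c, hDegC H₂ c = dC c)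
    (hbal₁ : BBalanced H₁) (hbal₂ : BBalanced H₂) :
    Relation.ReflTransGen IsSwitch H₁ H₂ :=
  balanced_realizations_switch_connected_general dA dB dC H₁ H₂ hH₁A hH₁B hH₁C hH₂A hH₂B hH₂C hbal₁
    hbal₂
end

section
/- Let G be a bipartite multigraph on vertex classes A and B whose degree sequence on A is almost regular (every degree in A equals k or k−1 for some fixed k) and whose degree sequence on B is arbitrary. Then G can be transformed by a finite series of multigraph switch operations (which preserve all vertex degrees) into a bipartite multigraph Ḡ with the same degree sequences that is B-balanced, i.e., for every b ∈ B there is an l such that every a ∈ A is joined to b by either l or l−1 parallel edges. -/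
/-!
If the column `b₁` is not balanced, pick a row `a₁` maximising `m a b₁` and a row `a₂` with
`m a₂ b₁ + 2 ≤ m a₁ b₁`. As the degrees of `a₁` and `a₂` differ by at most one, some other column
`b₂` has `m a₁ b₂ < m a₂ b₂`. The switch removing the edges `a₁b₁`, `a₂b₂` and adding `a₁b₂`,
`a₂b₁` lowers `∑ m a b ^ 2` by at least `2`, so repeating it terminates, and only at a
`B`-balanced multigraph.
-/

open Finset

variable {A B : Type*} [Fintype A] [Fintype B] [DecidableEq A] [DecidableEq B]

/-- A multigraph switch operation on a bipartite multigraph given by its edge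
multiplicities: the multiplicities `m a₁ b₁` and `m a₂ b₂` are each decreased by `1`
(requiring them to be at least `1`), the multiplicities `m a₁ b₂` and `m a₂ b₁` are
each increased by `1`, and all other multiplicities are unchanged. -/
def MultiSwitch (m m' : A → B → ℕ) : Prop :=
  ∃ a₁ a₂ b₁ b₂, a₁ ≠ a₂ ∧ b₁ ≠ b₂ ∧ 1 ≤ m a₁ b₁ ∧ 1 ≤ m a₂ b₂ ∧
    m' a₁ b₁ + 1 = m a₁ b₁ ∧ m' a₂ b₂ + 1 = m a₂ b₂ ∧
    m' a₁ b₂ = m a₁ b₂ + 1 ∧ m' a₂ b₁ = m a₂ b₁ + 1 ∧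
    (∀ a b, (a, b) ≠ (a₁, b₁) → (a, b) ≠ (a₂, b₂) → (a, b) ≠ (a₁, b₂) →
      (a, b) ≠ (a₂, b₁) → m' a b = m a b)

section General

variable {ι : Type*} [Fintype ι]

lemma exists_add_two_le_of_not_almost_const (f : ι → ℕ)
    (h : ¬ ∃ l, ∀ i, f i = l ∨ f i + 1 = l) : ∃ i j, f j + 2 ≤ f i := by
  have : Nonempty ι := by
    by_contra hι
    exact h ⟨0, fun i => (hι ⟨i⟩).elim⟩
  obtain ⟨i, -, hmax⟩ := exists_max_image univ f univ_nonempty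
  push Not at h
  obtain ⟨j, hj⟩ := h (f i)
  exact ⟨i, j, by have := hmax j (mem_univ j); omega⟩

variable [DecidableEq ι]

lemma exists_lt_of_sum_le_sum_add_one {f g : ι → ℕ} (hfg : ∑ x, f x ≤ ∑ x, g x + 1)
    {i : ι} (hi : g i + 2 ≤ f i) : ∃ j, j ≠ i ∧ f j < g j := by
  by_contra! h
  have hle : ∑ x ∈ univ.erase i, g x ≤ ∑ x ∈ univ.erase i, f x :=
    sum_le_sum fun x hx => h x (ne_of_mem_erase hx)
  rw [← add_sum_erase _ _ (mem_univ i), ← add_sum_erase _ _ (mem_univ i)] at hfg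
  omega

lemma sum_single_sub_single (i j : ι) :
    ∑ x, (Pi.single i 1 - Pi.single j 1 : ι → ℤ) x = 0 := by
  simp

lemma sum_mul_single_sub_single (f : ι → ℤ) (i j : ι) :
    ∑ x, f x * (Pi.single i 1 - Pi.single j 1 : ι → ℤ) x = f i - f j := by
  simp [mul_sub, sum_sub_distrib, Pi.single_apply]

lemma sum_single_sub_single_sq {i j : ι} (h : i ≠ j) :
    ∑ x, (Pi.single i 1 - Pi.single j 1 : ι → ℤ) x ^ 2 = 2 := by
  simp [sub_sq, sum_add_distrib, sum_sub_distrib, Pi.single_apply, h.symm]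

lemma Relation.ReflTransGen.eq_of_invariant {α β : Type*} {r : α → α → Prop} {x y : α}
    (f : α → β) (hf : ∀ x y, r x y → f x = f y) (h : Relation.ReflTransGen r x y) :
    f x = f y := by
  simpa [Relation.reflTransGen_eq_self] using h.lift f hf

end General

-- Rank one with vanishing row and column sums, so adding it to `m` preserves all degrees.
def switchChange (a₁ a₂ : A) (b₁ b₂ : B) (a : A) (b : B) : ℤ :=
  (Pi.single a₁ 1 - Pi.single a₂ 1 : A → ℤ) a * (Pi.single b₂ 1 - Pi.single b₁ 1 : B → ℤ) b

omit [Fintype A] [Fintype B] in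
lemma multiSwitch_iff {m m' : A → B → ℕ} :
    MultiSwitch m m' ↔ ∃ a₁ a₂ b₁ b₂, a₁ ≠ a₂ ∧ b₁ ≠ b₂ ∧ 1 ≤ m a₁ b₁ ∧ 1 ≤ m a₂ b₂ ∧
      ∀ a b, (m' a b : ℤ) = m a b + switchChange a₁ a₂ b₁ b₂ a b := by
  constructor
  · rintro ⟨a₁, a₂, b₁, b₂, hA, hB, h₁, h₂, h₁₁, h₂₂, h₁₂, h₂₁, hrest⟩
    refine ⟨a₁, a₂, b₁, b₂, hA, hB, h₁, h₂, fun a b => ?_⟩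
    by_cases ha₁ : a = a₁ <;> by_cases ha₂ : a = a₂ <;> by_cases hb₁ : b = b₁ <;>
      by_cases hb₂ : b = b₂ <;> subst_vars <;>
      simp_all [switchChange] <;> omega
  · rintro ⟨a₁, a₂, b₁, b₂, hA, hB, h₁, h₂, hm'⟩
    have h₁₁ := hm' a₁ b₁
    have h₂₂ := hm' a₂ b₂
    have h₁₂ := hm' a₁ b₂
    have h₂₁ := hm' a₂ b₁
    simp only [switchChange, Pi.sub_apply, Pi.single_apply, hA, hA.symm, hB, hB.symm, if_true,
      if_false] at h₁₁ h₂₂ h₁₂ h₂₁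
    refine ⟨a₁, a₂, b₁, b₂, hA, hB, h₁, h₂, by omega, by omega, by omega, by omega,
      fun a b n₁ n₂ n₃ n₄ => ?_⟩
    have hzero : switchChange a₁ a₂ b₁ b₂ a b = 0 := by
      simp only [ne_eq, Prod.ext_iff, not_and] at n₁ n₂ n₃ n₄
      by_cases ha₁ : a = a₁ <;> by_cases ha₂ : a = a₂ <;> simp_all [switchChange]
    have := hm' a b
    rw [hzero] at this
    omega

section Switch

variable {m m' : A → B → ℕ}

omit [Fintype A] in
lemma MultiSwitch.sum_row_eq (h : MultiSwitch m m') (a : A) : ∑ b, m' a b = ∑ b, m a b := by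
  obtain ⟨a₁, a₂, b₁, b₂, -, -, -, -, hm'⟩ := multiSwitch_iff.mp h
  have : ∑ b, (m' a b : ℤ) = ∑ b, (m a b : ℤ) := by
    simp only [hm', switchChange, sum_add_distrib, ← mul_sum, sum_single_sub_single, mul_zero,
      add_zero]
  exact_mod_cast this

omit [Fintype B] in
lemma MultiSwitch.sum_col_eq (h : MultiSwitch m m') (b : B) : ∑ a, m' a b = ∑ a, m a b := by
  obtain ⟨a₁, a₂, b₁, b₂, -, -, -, -, hm'⟩ := multiSwitch_iff.mp h
  have : ∑ a, (m' a b : ℤ) = ∑ a, (m a b : ℤ) := by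
    simp only [hm', switchChange, sum_add_distrib, ← sum_mul, sum_single_sub_single, zero_mul,
      add_zero]
  exact_mod_cast this

def sumSq (m : A → B → ℕ) : ℕ := ∑ a, ∑ b, m a b ^ 2

lemma sum_sum_mul_switchChange (m : A → B → ℕ) (a₁ a₂ : A) (b₁ b₂ : B) :
    ∑ a, ∑ b, (m a b : ℤ) * switchChange a₁ a₂ b₁ b₂ a b =
      m a₁ b₂ + m a₂ b₁ - m a₁ b₁ - m a₂ b₂ := by
  calc ∑ a, ∑ b, (m a b : ℤ) * switchChange a₁ a₂ b₁ b₂ a b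
      = ∑ a, (∑ b, (m a b : ℤ) * (Pi.single b₂ 1 - Pi.single b₁ 1 : B → ℤ) b) *
          (Pi.single a₁ 1 - Pi.single a₂ 1 : A → ℤ) a := by
        simp only [switchChange, sum_mul]
        exact sum_congr rfl fun a _ => sum_congr rfl fun b _ => by ring
    _ = _ := by simp only [sum_mul_single_sub_single]; ring

lemma sum_sum_switchChange_sq {a₁ a₂ : A} {b₁ b₂ : B} (hA : a₁ ≠ a₂) (hB : b₁ ≠ b₂) :
    ∑ a, ∑ b, switchChange a₁ a₂ b₁ b₂ a b ^ 2 = 4 := by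
  simp only [switchChange, mul_pow, ← sum_mul_sum, sum_single_sub_single_sq hA,
    sum_single_sub_single_sq hB.symm]
  norm_num

lemma sumSq_of_cast_eq_add_switchChange {a₁ a₂ : A} {b₁ b₂ : B} (hA : a₁ ≠ a₂) (hB : b₁ ≠ b₂)
    (hm' : ∀ a b, (m' a b : ℤ) = m a b + switchChange a₁ a₂ b₁ b₂ a b) :
    (sumSq m' : ℤ) = sumSq m + 2 * (m a₁ b₂ + m a₂ b₁ - m a₁ b₁ - m a₂ b₂) + 4 := by
  simp only [sumSq, Nat.cast_sum, Nat.cast_pow, hm', add_sq, sum_add_distrib, mul_assoc,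
    ← mul_sum, sum_sum_mul_switchChange, sum_sum_switchChange_sq hA hB]

omit [Fintype A] [Fintype B] in
lemma exists_multiSwitch {a₁ a₂ : A} {b₁ b₂ : B} (hA : a₁ ≠ a₂) (hB : b₁ ≠ b₂)
    (h₁ : 1 ≤ m a₁ b₁) (h₂ : 1 ≤ m a₂ b₂) :
    ∃ m', MultiSwitch m m' ∧ ∀ a b, (m' a b : ℤ) = m a b + switchChange a₁ a₂ b₁ b₂ a b := by
  have hnonneg : ∀ a b, 0 ≤ (m a b : ℤ) + switchChange a₁ a₂ b₁ b₂ a b := by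
    intro a b
    by_cases ha₁ : a = a₁ <;> by_cases ha₂ : a = a₂ <;> by_cases hb₁ : b = b₁ <;>
      by_cases hb₂ : b = b₂ <;> subst_vars <;> simp_all [switchChange] <;> omega
  have hm' : ∀ a b, ((m a b + switchChange a₁ a₂ b₁ b₂ a b).toNat : ℤ) =
      m a b + switchChange a₁ a₂ b₁ b₂ a b := fun a b => Int.toNat_of_nonneg (hnonneg a b)
  exact ⟨_, multiSwitch_iff.mpr ⟨a₁, a₂, b₁, b₂, hA, hB, h₁, h₂, hm'⟩, hm'⟩

def IsBalancedAt (m : A → B → ℕ) (b : B) : Prop := ∃ l, ∀ a, m a b = l ∨ m a b + 1 = l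

lemma exists_multiSwitch_sumSq_lt (hrows : ∀ a a', ∑ b, m a b ≤ ∑ b, m a' b + 1) {b₁ : B}
    (hb₁ : ¬ IsBalancedAt m b₁) : ∃ m', MultiSwitch m m' ∧ sumSq m' < sumSq m := by
  obtain ⟨a₁, a₂, h₂₁⟩ := exists_add_two_le_of_not_almost_const (fun a => m a b₁) hb₁
  obtain ⟨b₂, hB, h₁₂⟩ := exists_lt_of_sum_le_sum_add_one (hrows a₁ a₂) h₂₁
  have hA : a₁ ≠ a₂ := by rintro rfl; omega
  obtain ⟨m', hsw, hm'⟩ := exists_multiSwitch (m := m) hA hB.symm (by omega) (by omega)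
  have := sumSq_of_cast_eq_add_switchChange hA hB.symm hm'
  exact ⟨m', hsw, by omega⟩

theorem exists_reflTransGen_multiSwitch_isBalancedAt (m : A → B → ℕ)
    (hrows : ∀ a a', ∑ b, m a b ≤ ∑ b, m a' b + 1) :
    ∃ m', Relation.ReflTransGen MultiSwitch m m' ∧ ∀ b, IsBalancedAt m' b := by
  by_cases hbal : ∀ b, IsBalancedAt m b
  · exact ⟨m, .refl, hbal⟩
  obtain ⟨b, hb⟩ := not_forall.mp hbal
  obtain ⟨m₁, hsw, hlt⟩ := exists_multiSwitch_sumSq_lt hrows hb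
  have hrows₁ : ∀ a a', ∑ b, m₁ a b ≤ ∑ b, m₁ a' b + 1 := by
    simpa only [hsw.sum_row_eq] using hrows
  obtain ⟨m', hm', hbal'⟩ := exists_reflTransGen_multiSwitch_isBalancedAt m₁ hrows₁
  exact ⟨m', .head hsw hm', hbal'⟩
termination_by sumSq m

end Switch

/-- a bipartite multigraph whose degree sequence on `A` is almost
regular (every degree on `A` is `k` or `k−1`) can be transformed by a finite series of
multigraph switch operations (which preserve all vertex degrees) into a bipartite
multigraph with the same degree sequences that is `B`-balanced: for every `b ∈ B`
there is an `l` such that every `a ∈ A` is joined to `b` by `l` or `l−1` parallel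
edges. -/
theorem multigraph_balancing (k : ℕ) (m : A → B → ℕ)
    (hreg : ∀ a : A, (∑ b : B, m a b) = k ∨ (∑ b : B, m a b) + 1 = k) :
    ∃ m' : A → B → ℕ,
      Relation.ReflTransGen MultiSwitch m m' ∧
      (∀ a : A, ∑ b : B, m' a b = ∑ b : B, m a b) ∧
      (∀ b : B, ∑ a : A, m' a b = ∑ a : A, m a b) ∧
      (∀ b : B, ∃ l : ℕ, ∀ a : A, m' a b = l ∨ m' a b + 1 = l) := by
  have hrows : ∀ a a', ∑ b, m a b ≤ ∑ b, m a' b + 1 := fun a a' => by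
    rcases hreg a with h | h <;> rcases hreg a' with h' | h' <;> omega
  obtain ⟨m', hm', hbal⟩ := exists_reflTransGen_multiSwitch_isBalancedAt m hrows
  refine ⟨m', hm', fun a => ?_, fun b => ?_, hbal⟩
  · exact (hm'.eq_of_invariant (fun m => ∑ b, m a b) fun _ _ h => (h.sum_row_eq a).symm).symm
  · exact (hm'.eq_of_invariant (fun m => ∑ a, m a b) fun _ _ h => (h.sum_col_eq b).symm).symm
end
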